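/- arXiv:2002.05811 — 3 statements merged into one kernel-verified Lean document; each statement's English description precedes it below -/
import Mathlib

section
/- A small category C is local with respect to the inclusion i : {0} → I of an endpoint into the interval category I = (0 → 1), in the sense that the restriction functor [I, C] → [{0}, C] ≅ C is an equivalence of categories, if and only if C is a groupoid. -/
/-!
Restricting an arrow to its domain is always essentially surjective (take identities). It is
faithful iff every morphism `f` is epi, since a square out of `f` is determined by its left side
exactly when `f` can be cancelled on the left; it is full iff every `f : X ⟶ Y` is split mono,
since lifting `𝟙 X` to a square from `f` to `𝟙 X` is the same as giving a retraction of `f`.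
A morphism that is both epi and split mono is an isomorphism.
-/

open CategoryTheory

namespace CategoryTheory.Arrow

variable {C : Type*} [Category C]

instance essSurj_leftFunc : (leftFunc : Arrow C ⥤ C).EssSurj where
  mem_essImage X := ⟨Arrow.mk (𝟙 X), ⟨Iso.refl X⟩⟩

theorem faithful_leftFunc_iff :
    (leftFunc : Arrow C ⥤ C).Faithful ↔ ∀ {X Y : C} (f : X ⟶ Y), Epi f := by
  constructor
  · intro hF X Y f
    refine ⟨fun g h hgh => ?_⟩
    have hsq : homMk' (f := f) (g := f ≫ g) (𝟙 X) g = homMk' (𝟙 X) h (by simp [hgh]) :=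
      leftFunc.map_injective rfl
    exact congrArg CommaMorphism.right hsq
  · intro hepi
    refine ⟨fun {A B} φ ψ hφψ => hom_ext φ ψ hφψ ((cancel_epi A.hom).1 ?_)⟩
    rw [← w φ, ← w ψ]
    exact congrArg (· ≫ B.hom) hφψ

theorem full_leftFunc_iff :
    (leftFunc : Arrow C ⥤ C).Full ↔ ∀ {X Y : C} (f : X ⟶ Y), IsSplitMono f := by
  constructor
  · intro hF X Y f
    obtain ⟨ψ, hψ⟩ := leftFunc.map_surjective (X := Arrow.mk f) (Y := Arrow.mk (𝟙 X)) (𝟙 X)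
    have hleft : ψ.left = 𝟙 X := hψ
    exact ⟨⟨ψ.right, by simpa [hleft] using (w_mk ψ).symm⟩⟩
  · intro hmono
    exact ⟨fun {A B} u => ⟨homMk u (retraction A.hom ≫ u ≫ B.hom), rfl⟩⟩

end CategoryTheory.Arrow

/-- A small category `C` is local with respect to the endpoint inclusion
`{0} → I` of the interval category `I = (0 → 1)` — i.e. the restriction functor
`[I, C] → C` (evaluation of an arrow at its domain) is an equivalence of
categories — if and only if `C` is a groupoid (every morphism is invertible). -/
theorem local_wrt_interval_iff_groupoid {C : Type u} [Category.{v} C] :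
    (Arrow.leftFunc : Arrow C ⥤ C).IsEquivalence ↔
      ∀ {X Y : C} (f : X ⟶ Y), IsIso f := by
  constructor
  · intro hF X Y f
    have := Arrow.faithful_leftFunc_iff.1 hF.faithful f
    have := Arrow.full_leftFunc_iff.1 hF.full f
    exact isIso_of_epi_of_isSplitMono f
  · intro hiso
    exact
      { faithful := Arrow.faithful_leftFunc_iff.2 fun f => have := hiso f; inferInstance
        full := Arrow.full_leftFunc_iff.2 fun f => have := hiso f; inferInstance }
end

section
/- The free groupoid functor Π₁ : Cat → Gpd (left adjoint to the inclusion of groupoids into categories) preserves finite products: for small categories C and D, the canonical map Π₁(C × D) → Π₁(C) × Π₁(D) is an isomorphism of groupoids. -/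
open CategoryTheory

universe u

/-- `η : C ⥤ G` exhibits the groupoid `G` as the free groupoid `Π₁(C)` on the
category `C`: every functor from `C` to a groupoid extends uniquely along `η`. -/
def IsFreeGroupoidOn {C : Type u} [Category.{u} C] {G : Type u} [Groupoid.{u} G]
    (η : C ⥤ G) : Prop :=
  ∀ (H : Type u) [Groupoid.{u} H], ∀ F : C ⥤ H, ∃! F' : G ⥤ H, η ⋙ F' = F

/-
Both `ηC.prod ηD` and `η` are free on `C × D`, so `Π₁(C) × Π₁(D)` and `Π₁(C × D)` are
canonically isomorphic. Freeness of `ηC.prod ηD` follows by currying: a functor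
`Π₁(C) × Π₁(D) ⥤ H` is a functor `Π₁(C) ⥤ (Π₁(D) ⥤ H)`, and functor categories into a
groupoid are groupoids, so the two variables can be freed one at a time.
-/

universe v₁ v₂ u₁ u₂

noncomputable instance Functor.groupoid {E : Type u₁} [Category.{v₁} E] {H : Type u₂}
    [Groupoid.{v₂} H] : Groupoid.{max u₁ v₂} (E ⥤ H) :=
  Groupoid.ofIsIso fun f => NatIso.isIso_of_isIso_app f

namespace IsFreeGroupoidOn

variable {C G : Type u} [Category.{u} C] [Groupoid.{u} G] {η : C ⥤ G}

theorem bijective_whiskerLeft (hη : IsFreeGroupoidOn η) (H : Type u) [Groupoid.{u} H] :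
    Function.Bijective fun F : G ⥤ H => η ⋙ F :=
  ⟨fun F₁ _ h => (hη H (η ⋙ F₁)).unique rfl h.symm,
    fun F => (hη H F).exists⟩

theorem of_bijective_whiskerLeft
    (h : ∀ (H : Type u) [Groupoid.{u} H], Function.Bijective fun F : G ⥤ H => η ⋙ F) :
    IsFreeGroupoidOn η := fun H _ F =>
  existsUnique_of_exists_of_unique ((h H).2 F) fun _ _ h₁ h₂ => (h H).1 (h₁.trans h₂.symm)

theorem eq_id (hη : IsFreeGroupoidOn η) {F : G ⥤ G} (hF : η ⋙ F = η) : F = 𝟭 G :=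
  (hη.bijective_whiskerLeft G).1 (hF.trans (Functor.comp_id η).symm)

theorem prod {D GD : Type u} [Category.{u} D] [Groupoid.{u} GD] {ηD : D ⥤ GD}
    (hC : IsFreeGroupoidOn η) (hD : IsFreeGroupoidOn ηD) :
    IsFreeGroupoidOn (η.prod ηD) := by
  refine of_bijective_whiskerLeft fun H _ => ?_
  have hcurry : Function.Bijective (Functor.curry.obj : (G × GD ⥤ H) → _) :=
    Function.bijective_iff_has_inverse.2
      ⟨Functor.uncurry.obj, Functor.uncurry_obj_curry_obj, Functor.curry_obj_uncurry_obj⟩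
  have huncurry : Function.Bijective (Functor.uncurry.obj : (C ⥤ D ⥤ H) → _) :=
    Function.bijective_iff_has_inverse.2
      ⟨Functor.curry.obj, Functor.curry_obj_uncurry_obj, Functor.uncurry_obj_curry_obj⟩
  have hflip {A B : Type u} [Category.{u} A] [Category.{u} B] :
      Function.Bijective (Functor.flip : (A ⥤ B ⥤ H) → _) :=
    Function.bijective_iff_has_inverse.2 ⟨Functor.flip, Functor.flip_flip, Functor.flip_flip⟩
  have hcomp := huncurry.comp <| (hC.bijective_whiskerLeft (D ⥤ H)).comp <| hflip.comp <|
    (hD.bijective_whiskerLeft (G ⥤ H)).comp <| hflip.comp hcurry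
  convert hcomp using 1
  funext F
  exact (Functor.uncurry_obj_curry_obj_flip_flip' η ηD F).symm

end IsFreeGroupoidOn

/-- The free groupoid functor `Π₁ : Cat → Gpd` preserves finite products: if
`GC = Π₁(C)`, `GD = Π₁(D)` and `G = Π₁(C × D)`, then the canonical comparison
functor `Π₁(C × D) → Π₁(C) × Π₁(D)` (the unique functor compatible with the
units) is an isomorphism of groupoids. -/
theorem freeGroupoid_preserves_products
    {C D GC GD G : Type u} [Category.{u} C] [Category.{u} D]
    [Groupoid.{u} GC] [Groupoid.{u} GD] [Groupoid.{u} G]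
    (ηC : C ⥤ GC) (ηD : D ⥤ GD) (η : C × D ⥤ G)
    (hC : IsFreeGroupoidOn ηC) (hD : IsFreeGroupoidOn ηD)
    (hCD : IsFreeGroupoidOn η)
    (K : G ⥤ GC × GD) (hK : η ⋙ K = ηC.prod ηD) :
    ∃ K' : GC × GD ⥤ G, K ⋙ K' = 𝟭 G ∧ K' ⋙ K = 𝟭 (GC × GD) := by
  have hprod := hC.prod hD
  obtain ⟨K', hK', -⟩ := hprod G η
  refine ⟨K', hCD.eq_id ?_, hprod.eq_id ?_⟩
  · rw [← Functor.assoc, hK, hK']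
  · rw [← Functor.assoc, hK', hK]
end

section
/- A functor F : C → D between small categories induces an equivalence of functor categories [F, Z] : [D, Z] → [C, Z] for every groupoid Z if and only if the induced functor Π₁(F) : Π₁(C) → Π₁(D) between free groupoids is an equivalence of categories. -/
/-!
A free groupoid `η : C ⥤ Π₁(C)` is the localization of `C` at all morphisms, so precomposition
with `η` is fully faithful into any category; into a groupoid `Z` it is also surjective on
objects by the universal property, hence `[Π₁(C), Z] ≌ [C, Z]`. Under these equivalences
`[F, Z]` becomes `[Π₁(F), Z]`, and a functor `F'` between groupoids is an equivalence as soon as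
`[F', Z]` is one for `Z = Π₁(C)` and `Z = Π₁(D)`: an inverse is a preimage of the identity.
-/

open CategoryTheory

universe u

namespace IsFreeGroupoidOn

variable {C G : Type u} [Category.{u} C] [Groupoid.{u} G] {η : C ⥤ G}

noncomputable def strictUniversalPropertyFixedTarget (hη : IsFreeGroupoidOn η)
    (E : Type u) [Category.{u} E] [IsGroupoid E] :
    Localization.StrictUniversalPropertyFixedTarget η ⊤ E :=
  letI := Groupoid.ofIsGroupoid (C := E)
  { inverts := fun _ _ _ _ => inferInstance
    lift := fun F _ => (hη E F).exists.choose
    fac := fun F _ => (hη E F).exists.choose_spec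
    uniq := fun _ F₂ h => (hη E (η ⋙ F₂)).unique h rfl }

theorem isLocalization (hη : IsFreeGroupoidOn η) : η.IsLocalization ⊤ :=
  .mk' _ _ (hη.strictUniversalPropertyFixedTarget G) (hη.strictUniversalPropertyFixedTarget _)

theorem isEquivalence_whiskeringLeft (hη : IsFreeGroupoidOn η) (Z : Type u) [Groupoid.{u} Z] :
    ((Functor.whiskeringLeft C G Z).obj η).IsEquivalence :=
  haveI := hη.isLocalization
  { faithful := Localization.faithful_whiskeringLeft η ⊤ Z
    full := Localization.full_whiskeringLeft η ⊤ Z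
    essSurj := ⟨fun K => ⟨_, ⟨eqToIso (hη Z K).exists.choose_spec⟩⟩⟩ }

end IsFreeGroupoidOn

namespace CategoryTheory.Functor

theorem isEquivalence_iff_of_comp_iso_comp {A B C D : Type*} [Category* A] [Category* B]
    [Category* C] [Category* D] {T : A ⥤ B} {L : A ⥤ C} {R : B ⥤ D} {S : C ⥤ D}
    (e : T ⋙ R ≅ L ⋙ S) [L.IsEquivalence] [R.IsEquivalence] :
    T.IsEquivalence ↔ S.IsEquivalence := by
  constructor
  · intro _
    have := isEquivalence_of_iso e
    exact isEquivalence_of_comp_left L S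
  · intro _
    have := isEquivalence_of_iso e.symm
    exact isEquivalence_of_comp_right T R

theorem isEquivalence_of_isEquivalence_whiskeringLeft {A B : Type*} [Category* A] [Category* B]
    (F : A ⥤ B) [((whiskeringLeft A B A).obj F).IsEquivalence]
    [((whiskeringLeft A B B).obj F).IsEquivalence] : F.IsEquivalence := by
  let G : B ⥤ A := ((whiskeringLeft A B A).obj F).objPreimage (𝟭 A)
  let unit : F ⋙ G ≅ 𝟭 A := ((whiskeringLeft A B A).obj F).objObjPreimageIso (𝟭 A)
  let counit : G ⋙ F ≅ 𝟭 B := ((whiskeringLeft A B B).obj F).preimageIso <|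
    (associator F G F).symm ≪≫ isoWhiskerRight unit F ≪≫ F.leftUnitor ≪≫ F.rightUnitor.symm
  exact (Equivalence.mk F G unit.symm counit).isEquivalence_functor

theorem isEquivalence_iff_forall_groupoid_isEquivalence_whiskeringLeft {A B : Type u}
    [Groupoid.{u} A] [Groupoid.{u} B] (F : A ⥤ B) :
    F.IsEquivalence ↔
      ∀ (Z : Type u) [Groupoid.{u} Z], ((whiskeringLeft A B Z).obj F).IsEquivalence :=
  ⟨fun _ _ _ => inferInstance, fun h =>
    have := h A
    have := h B
    isEquivalence_of_isEquivalence_whiskeringLeft F⟩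

end CategoryTheory.Functor

/-- A functor `F : C ⥤ D` induces an equivalence of functor categories
`[D, Z] ⥤ [C, Z]` for every groupoid `Z` if and only if the induced functor
`Π₁(F) : Π₁(C) ⥤ Π₁(D)` between free groupoids is an equivalence of
categories. -/
theorem precomposition_equivalence_iff_freeGroupoid_equivalence
    {C D GC GD : Type u} [Category.{u} C] [Category.{u} D]
    [Groupoid.{u} GC] [Groupoid.{u} GD]
    (ηC : C ⥤ GC) (ηD : D ⥤ GD)
    (hC : IsFreeGroupoidOn ηC) (hD : IsFreeGroupoidOn ηD)
    (F : C ⥤ D) (F' : GC ⥤ GD) (hF' : ηC ⋙ F' = F ⋙ ηD) :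
    (∀ (Z : Type u) [Groupoid.{u} Z],
        ((Functor.whiskeringLeft C D Z).obj F).IsEquivalence) ↔ F'.IsEquivalence := by
  have square (Z : Type u) [Groupoid.{u} Z] :
      (Functor.whiskeringLeft GC GD Z).obj F' ⋙ (Functor.whiskeringLeft C GC Z).obj ηC =
        (Functor.whiskeringLeft D GD Z).obj ηD ⋙ (Functor.whiskeringLeft C D Z).obj F := by
    rw [← Functor.whiskeringLeft_obj_comp, ← Functor.whiskeringLeft_obj_comp, hF']
  have transfer (Z : Type u) [Groupoid.{u} Z] :
      ((Functor.whiskeringLeft GC GD Z).obj F').IsEquivalence ↔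
        ((Functor.whiskeringLeft C D Z).obj F).IsEquivalence :=
    have := hC.isEquivalence_whiskeringLeft Z
    have := hD.isEquivalence_whiskeringLeft Z
    Functor.isEquivalence_iff_of_comp_iso_comp (eqToIso (square Z))
  rw [F'.isEquivalence_iff_forall_groupoid_isEquivalence_whiskeringLeft]
  exact forall_congr' fun Z => forall_congr' fun _ => (transfer Z).symm
end
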